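/- Let s ∈ (0,1), n ≥ 1, and φ(x) = (1 − |x|²)₊^s on ℝⁿ. Let L = Σ_{i=1}^n (−∂²_i)^s be the sum of one-dimensional fractional Laplacians in the coordinate directions. Then Lφ(x) = c for every x ∈ B₁, where c = n·c₀ > 0 and c₀ is the constant such that the one-dimensional fractional Laplacian of (1−t²)₊^s equals c₀ on (−1,1). -/

import Mathlib

/-!
On the line through `x` in the direction `eᵢ`, the barrier restricts to `t ↦ (a² - t²)₊^s` with
`a² = 1 - ‖x‖² + xᵢ²`, which is positive in the unit ball. This is the one-dimensional barrier
rescaled by `a` in both variable and value, and the `(−∂²)^s` operator is homogeneous of degree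
`2s` under dilations, so the two factors cancel: every directional operator equals `c₀` at `x`,
the point `xᵢ / a` lying in `(-1, 1)`.
-/

open Metric MeasureTheory Set

noncomputable section

/-- The barrier `φ(x) = (1-|x|²)₊^s`. -/
def barrierFn (n : ℕ) (s : ℝ) (x : EuclideanSpace ℝ (Fin n)) : ℝ :=
  (max (1 - ‖x‖ ^ 2) 0) ^ s

/-- The one-dimensional fractional Laplacian of `φ` in the `i`-th coordinate
direction, evaluated at `x`. -/
def fracLap1D (n : ℕ) (s : ℝ) (i : Fin n) (x : EuclideanSpace ℝ (Fin n)) : ℝ :=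
  ∫ ρ in Set.Ioi (0 : ℝ),
    (2 * barrierFn n s x - barrierFn n s (x + ρ • EuclideanSpace.single i (1 : ℝ))
      - barrierFn n s (x - ρ • EuclideanSpace.single i (1 : ℝ))) / ρ ^ (1 + 2 * s)

def fracLapLine (s : ℝ) (u : ℝ → ℝ) (t : ℝ) : ℝ :=
  ∫ ρ in Ioi (0 : ℝ), (2 * u t - u (t + ρ) - u (t - ρ)) / ρ ^ (1 + 2 * s)

lemma fracLapLine_const_mul (s c : ℝ) (u : ℝ → ℝ) (t : ℝ) :
    fracLapLine s (fun t => c * u t) t = c * fracLapLine s u t := by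
  unfold fracLapLine
  rw [← integral_const_mul]
  congr 1 with ρ
  ring

lemma fracLapLine_comp_div {a : ℝ} (ha : 0 < a) (s : ℝ) (u : ℝ → ℝ) (τ : ℝ) :
    fracLapLine s (fun t => u (t / a)) (a * τ) = (a ^ (2 * s))⁻¹ * fracLapLine s u τ := by
  set F : ℝ → ℝ := fun ρ =>
    (2 * u (a * τ / a) - u ((a * τ + ρ) / a) - u ((a * τ - ρ) / a)) / ρ ^ (1 + 2 * s)
  have hF : ∀ σ ∈ Ioi (0 : ℝ), F (a * σ) =
      (a ^ (1 + 2 * s))⁻¹ * ((2 * u τ - u (τ + σ) - u (τ - σ)) / σ ^ (1 + 2 * s)) := by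
    intro σ hσ
    simp only [F, Real.mul_rpow ha.le (le_of_lt hσ), div_eq_mul_inv]
    field_simp
  have hscale := integral_comp_mul_left_Ioi F 0 ha
  rw [mul_zero, setIntegral_congr_fun measurableSet_Ioi hF, integral_const_mul,
    smul_eq_mul] at hscale
  calc fracLapLine s (fun t => u (t / a)) (a * τ)
      = a * (a⁻¹ * ∫ ρ in Ioi (0 : ℝ), F ρ) := by
        rw [mul_inv_cancel_left₀ ha.ne']
        rfl
    _ = (a ^ (2 * s))⁻¹ * fracLapLine s u τ := by
        rw [← hscale, Real.rpow_add ha, Real.rpow_one, fracLapLine]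
        field_simp

lemma max_sq_sub_sq_rpow {a : ℝ} (ha : 0 < a) (s t : ℝ) :
    (max (a ^ 2 - t ^ 2) 0) ^ s = a ^ (2 * s) * (max (1 - (t / a) ^ 2) 0) ^ s := by
  have hsq : a ^ 2 - t ^ 2 = a ^ 2 * (1 - (t / a) ^ 2) := by field_simp
  rw [hsq, ← mul_zero (a ^ 2), ← mul_max_of_nonneg _ _ (sq_nonneg a), mul_zero,
    Real.mul_rpow (sq_nonneg a) (le_max_right _ _), ← Real.rpow_natCast,
    ← Real.rpow_mul ha.le, Nat.cast_ofNat]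

lemma fracLapLine_max_sq_sub_sq_rpow {a : ℝ} (ha : 0 < a) (s τ : ℝ) :
    fracLapLine s (fun t => (max (a ^ 2 - t ^ 2) 0) ^ s) (a * τ)
      = fracLapLine s (fun t => (max (1 - t ^ 2) 0) ^ s) τ := by
  simp_rw [max_sq_sub_sq_rpow ha]
  rw [fracLapLine_const_mul s _ (fun t => (max (1 - (t / a) ^ 2) 0) ^ s),
    fracLapLine_comp_div ha s (fun t => (max (1 - t ^ 2) 0) ^ s),
    mul_inv_cancel_left₀ (Real.rpow_pos_of_pos ha _).ne']

lemma EuclideanSpace.norm_add_smul_single_sq {ι : Type*} [Fintype ι] [DecidableEq ι]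
    (x : EuclideanSpace ℝ ι) (i : ι) (ρ : ℝ) :
    ‖x + ρ • EuclideanSpace.single i (1 : ℝ)‖ ^ 2 = ‖x‖ ^ 2 - x i ^ 2 + (x i + ρ) ^ 2 := by
  rw [norm_add_sq_real, real_inner_smul_right, EuclideanSpace.inner_single_right, norm_smul,
    PiLp.norm_single]
  simp only [conj_trivial, one_mul, norm_one, mul_one, Real.norm_eq_abs, sq_abs]
  ring

lemma fracLap1D_eq_fracLapLine (n : ℕ) (s : ℝ) (i : Fin n) (x : EuclideanSpace ℝ (Fin n)) :
    fracLap1D n s i x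
      = fracLapLine s (fun t => (max ((1 - ‖x‖ ^ 2 + x i ^ 2) - t ^ 2) 0) ^ s) (x i) := by
  have hline : ∀ ρ : ℝ, barrierFn n s (x + ρ • EuclideanSpace.single i 1)
      = (max ((1 - ‖x‖ ^ 2 + x i ^ 2) - (x i + ρ) ^ 2) 0) ^ s := by
    intro ρ
    rw [barrierFn, EuclideanSpace.norm_add_smul_single_sq]
    ring_nf
  have hsub : ∀ ρ : ℝ, x - ρ • EuclideanSpace.single i (1 : ℝ)
      = x + (-ρ) • EuclideanSpace.single i 1 := by
    intro ρ
    rw [neg_smul, sub_eq_add_neg]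
  have hzero := hline 0
  rw [zero_smul, add_zero, add_zero] at hzero
  simp only [fracLap1D, fracLapLine, hsub, hline, hzero, ← sub_eq_add_neg]

lemma fracLap1D_eq_of_mem_ball {n : ℕ} {s c₀ : ℝ}
    (hc₀ : ∀ t ∈ Ioo (-1 : ℝ) 1, fracLapLine s (fun t => (max (1 - t ^ 2) 0) ^ s) t = c₀)
    {x : EuclideanSpace ℝ (Fin n)} (hx : x ∈ ball 0 1) (i : Fin n) :
    fracLap1D n s i x = c₀ := by
  have hx1 : ‖x‖ ^ 2 < 1 := by
    rw [mem_ball_zero_iff] at hx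
    nlinarith [norm_nonneg x]
  have hA : 0 < 1 - ‖x‖ ^ 2 + x i ^ 2 := by nlinarith [sq_nonneg (x i)]
  set a := √(1 - ‖x‖ ^ 2 + x i ^ 2)
  have ha : 0 < a := Real.sqrt_pos.2 hA
  have hτ : x i / a ∈ Ioo (-1 : ℝ) 1 := by
    have hxa : |x i| < a := Real.lt_sqrt (abs_nonneg _) |>.2 (by rw [sq_abs]; linarith)
    rw [mem_Ioo, ← abs_lt, abs_div, abs_of_pos ha, div_lt_one ha]
    exact hxa
  have hline : fracLap1D n s i x
      = fracLapLine s (fun t => (max (a ^ 2 - t ^ 2) 0) ^ s) (a * (x i / a)) := by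
    rw [Real.sq_sqrt hA.le, mul_div_cancel₀ _ ha.ne']
    exact fracLap1D_eq_fracLapLine n s i x
  rw [hline, fracLapLine_max_sq_sub_sq_rpow ha]
  exact hc₀ _ hτ

theorem sum_one_dim_fracLap_of_barrier_constant_general
    (n : ℕ) (s c₀ : ℝ)
    (hc₀ : ∀ t ∈ Set.Ioo (-1 : ℝ) 1,
      (∫ ρ in Set.Ioi (0 : ℝ),
        (2 * (max (1 - t ^ 2) 0) ^ s - (max (1 - (t + ρ) ^ 2) 0) ^ s
          - (max (1 - (t - ρ) ^ 2) 0) ^ s) / ρ ^ (1 + 2 * s)) = c₀) :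
    ∀ x ∈ Metric.ball (0 : EuclideanSpace ℝ (Fin n)) 1,
      (∑ i : Fin n, fracLap1D n s i x) = n * c₀ := by
  intro x hx
  simp [fracLap1D_eq_of_mem_ball hc₀ hx]

/-- For `L = Σᵢ (−∂²ᵢ)^s` and `φ(x) = (1-|x|²)₊^s`, one has `Lφ ≡ n c₀ > 0`
in `B₁`, where `c₀` is the constant value of the one-dimensional fractional
Laplacian of `(1-t²)₊^s` on `(-1,1)`. -/
theorem sum_one_dim_fracLap_of_barrier_constant
    (n : ℕ) (s c₀ : ℝ) (hs : s ∈ Set.Ioo (0 : ℝ) 1) (hc₀pos : 0 < c₀)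
    (hc₀ : ∀ t ∈ Set.Ioo (-1 : ℝ) 1,
      (∫ ρ in Set.Ioi (0 : ℝ),
        (2 * (max (1 - t ^ 2) 0) ^ s - (max (1 - (t + ρ) ^ 2) 0) ^ s
          - (max (1 - (t - ρ) ^ 2) 0) ^ s) / ρ ^ (1 + 2 * s)) = c₀) :
    ∀ x ∈ Metric.ball (0 : EuclideanSpace ℝ (Fin n)) 1,
      (∑ i : Fin n, fracLap1D n s i x) = n * c₀ :=
  sum_one_dim_fracLap_of_barrier_constant_general n s c₀ hc₀

end
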